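/- Let G be a finite group acting ergodically on a von Neumann algebra 𝔄 via a unitary representation U. Let p ∈ 𝔄 be a nonzero projection and let s_1 = 1, s_2, …, s_k be distinct elements of G such that for each i ≤ k, the closed subspace spanned by U(s_1)(range p), …, U(s_{i−1})(range p) intersects U(s_i)(range p) trivially. Suppose moreover that the closed subspace spanned by U(s_1)(range p), …, U(s_k)(range p) is not all of H. Then there exist t ∈ G with t ∉ {s_1, …, s_k} and a nonzero projection p' ∈ 𝔄 with range p' ⊆ range p such that the closed subspace spanned by U(s_1)(range p'), …, U(s_k)(range p') intersects U(t)(range p') trivially. -/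

import Mathlib

variable {H : Type*} [NormedAddCommGroup H] [InnerProductSpace ℂ H] [CompleteSpace H]

/-- A projection on a Hilbert space: a self-adjoint idempotent bounded operator. -/
def IsProjectionCLM (p : H →L[ℂ] H) : Prop := IsSelfAdjoint p ∧ IsIdempotentElem p

/-!
The closed span of all translates `U g (range p)` is invariant under the commutant of `𝔄` and
under `U`, so its projection is a `G`-invariant element of `𝔄`; by ergodicity it is `1`. Since the
closed span `M` of the translates by the `s j` is proper, some translate `U t (range p)` is not
contained in `M`. With `e` the projection onto `M` and `q = U t p U t*`, the range projection `r`
of `q (1 - e)` lies in `𝔄`, is nonzero, is dominated by `q` and meets `M` trivially; then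
`p' = U t* r U t` works.
-/

open ContinuousLinearMap Module.End

lemma isProjectionCLM_iff {p : H →L[ℂ] H} : IsProjectionCLM p ↔ IsStarProjection p :=
  ⟨fun h => ⟨h.2, h.1⟩, fun h => ⟨h.2, h.1⟩⟩

lemma Module.End.iSup_mem_invtSubmodule {R M : Type*} [Semiring R] [AddCommMonoid M]
    [Module R M] {f : Module.End R M} {ι : Sort*} {V : ι → Submodule R M}
    (h : ∀ i, V i ∈ f.invtSubmodule) : (⨆ i, V i) ∈ f.invtSubmodule := by
  rw [mem_invtSubmodule_iff_map_le, Submodule.map_iSup]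
  exact iSup_mono fun i => (mem_invtSubmodule_iff_map_le f).1 (h i)

section Commute

variable {R M : Type*} [Semiring R] [TopologicalSpace M] [AddCommMonoid M] [Module R M]
  {T S : M →L[R] M}

lemma ContinuousLinearMap.range_mem_invtSubmodule_of_commute (h : Commute T S) :
    LinearMap.range (T : M →ₗ[R] M) ∈ invtSubmodule (S : M →ₗ[R] M) := by
  rw [mem_invtSubmodule_iff_forall_mem_of_mem]
  rintro _ ⟨x, rfl⟩
  exact ⟨S x, congr($h x)⟩

lemma ContinuousLinearMap.ker_mem_invtSubmodule_of_commute (h : Commute T S) :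
    LinearMap.ker (T : M →ₗ[R] M) ∈ invtSubmodule (S : M →ₗ[R] M) := by
  rw [mem_invtSubmodule_iff_forall_mem_of_mem]
  intro x hx
  simp only [LinearMap.mem_ker, coe_coe] at hx ⊢
  change (T * S) x = 0
  rw [h.eq]
  exact congr(S $hx).trans (map_zero S)

lemma ContinuousLinearMap.range_mul_mul_of_surjective (U V : M →L[R] M)
    (hV : Function.Surjective V) :
    LinearMap.range ((U * T * V : M →L[R] M) : M →ₗ[R] M) =
      (LinearMap.range (T : M →ₗ[R] M)).map (U : M →ₗ[R] M) := by
  rw [mul_def, toLinearMap_comp,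
    LinearMap.range_comp_of_range_eq_top _ (LinearMap.range_eq_top.2 hV), mul_def,
    toLinearMap_comp, LinearMap.range_comp]

end Commute

lemma range_unitary_conj (u : unitary (H →L[ℂ] H)) (T : H →L[ℂ] H) :
    LinearMap.range (((u : H →L[ℂ] H) * T * star (u : H →L[ℂ] H) : H →L[ℂ] H) : H →ₗ[ℂ] H) =
      (LinearMap.range (T : H →ₗ[ℂ] H)).map (u : H →ₗ[ℂ] H) :=
  range_mul_mul_of_surjective _ _ fun y =>
    ⟨(u : H →L[ℂ] H) y, by
      change (star (u : H →L[ℂ] H) * u) y = y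
      rw [Unitary.coe_star_mul_self]; rfl⟩

lemma IsStarProjection.unitary_conj {p : H →L[ℂ] H} (hp : IsStarProjection p)
    (u : unitary (H →L[ℂ] H)) : IsStarProjection ((u : H →L[ℂ] H) * p * star (u : H →L[ℂ] H)) :=
  hp.map (Unitary.conjStarAlgAut ℂ _ u)

lemma IsStarProjection.orthogonal_ker {q : H →L[ℂ] H} (hq : IsStarProjection q) :
    (LinearMap.ker (q : H →ₗ[ℂ] H))ᗮ = LinearMap.range (q : H →ₗ[ℂ] H) := by
  rw [ContinuousLinearMap.orthogonal_ker, hq.isSelfAdjoint.adjoint_eq,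
    hq.isIdempotentElem.isClosed_range.submodule_topologicalClosure_eq]

lemma map_unitary_one {G : Type*} [Group G] (U : G →* unitary (H →L[ℂ] H)) (K : Submodule ℂ H) :
    K.map (U 1 : H →ₗ[ℂ] H) = K := by
  rw [map_one]
  exact K.map_id

lemma map_map_unitary {G : Type*} [Group G] (U : G →* unitary (H →L[ℂ] H)) (a b : G)
    (K : Submodule ℂ H) :
    (K.map (U a : H →ₗ[ℂ] H)).map (U b : H →ₗ[ℂ] H) = K.map (U (b * a) : H →ₗ[ℂ] H) := by
  rw [← Submodule.map_comp, map_mul]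
  rfl

lemma map_range_unitary_conj {G : Type*} [Group G] (U : G →* unitary (H →L[ℂ] H)) (a g : G)
    (T : H →L[ℂ] H) :
    (LinearMap.range (((U a : H →L[ℂ] H) * T * star (U a : H →L[ℂ] H) : H →L[ℂ] H) :
      H →ₗ[ℂ] H)).map (U g : H →ₗ[ℂ] H) =
        (LinearMap.range (T : H →ₗ[ℂ] H)).map (U (g * a) : H →ₗ[ℂ] H) := by
  rw [range_unitary_conj, map_map_unitary]

namespace VonNeumannAlgebra

variable (𝔄 : VonNeumannAlgebra H)

lemma starProjection_mem_of_forall_mem_invtSubmodule (K : Submodule ℂ H)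
    [K.HasOrthogonalProjection]
    (h : ∀ y ∈ 𝔄.commutant, K ∈ invtSubmodule (y : H →ₗ[ℂ] H)) : K.starProjection ∈ 𝔄 :=
  (IsStarProjection.mem_iff isStarProjection_starProjection 𝔄).2 <| by
    simpa only [Submodule.range_starProjection]

lemma starProjection_closure_iSup_range_mem {ι : Sort*} {T : ι → H →L[ℂ] H}
    (hT : ∀ i, T i ∈ 𝔄) :
    (⨆ i, LinearMap.range (T i : H →ₗ[ℂ] H)).topologicalClosure.starProjection ∈ 𝔄 :=
  starProjection_mem_of_forall_mem_invtSubmodule 𝔄 _ fun _ hy =>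
    Submodule.topologicalClosure_mem_invtSubmodule <| iSup_mem_invtSubmodule fun i =>
      range_mem_invtSubmodule_of_commute (mem_commutant_iff.1 hy _ (hT i))

end VonNeumannAlgebra

section Ergodic

variable {G : Type*} [Group G] (𝔄 : VonNeumannAlgebra H) (U : G →* unitary (H →L[ℂ] H))

lemma eq_top_of_ergodic
    (herg : ∀ T ∈ 𝔄,
      (∀ s : G, (U s : H →L[ℂ] H) * T * star (U s : H →L[ℂ] H) = T) →
      ∃ c : ℂ, T = c • (1 : H →L[ℂ] H))
    (K : Submodule ℂ H) [K.HasOrthogonalProjection] (hK𝔄 : K.starProjection ∈ 𝔄)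
    (hKU : ∀ g, K ∈ invtSubmodule (U g : H →ₗ[ℂ] H)) (hK : K ≠ ⊥) : K = ⊤ := by
  have hcomm : ∀ g, Commute K.starProjection (U g : H →L[ℂ] H) := fun g =>
    (K.isIdempotentElem_starProjection.commute_iff).2
      ⟨by rw [K.range_starProjection]; exact hKU g, by
        rw [K.ker_starProjection]
        refine orthogonal_mem_invtSubmodule ?_
        rw [← star_eq_adjoint, ← Unitary.coe_star, Unitary.star_eq_inv, ← map_inv]
        exact hKU g⁻¹⟩
  obtain ⟨c, hc⟩ := herg _ hK𝔄 fun g => by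
    rw [← (hcomm g).eq, mul_assoc, Unitary.mul_star_self_of_mem (U g).2, mul_one]
  obtain ⟨x, hxK, hx0⟩ := Submodule.exists_mem_ne_zero_of_ne_bot hK
  have hc1 : c = 1 := smul_left_injective ℂ hx0 <| by
    simpa [hc] using K.starProjection_eq_self_iff.2 hxK
  rw [eq_top_iff]
  intro y _
  rw [← K.starProjection_eq_self_iff, hc, hc1, one_smul]
  rfl

lemma closure_iSup_map_range_eq_top
    (hinv : ∀ T ∈ 𝔄, ∀ s : G,
      (U s : H →L[ℂ] H) * T * star (U s : H →L[ℂ] H) ∈ 𝔄)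
    (herg : ∀ T ∈ 𝔄,
      (∀ s : G, (U s : H →L[ℂ] H) * T * star (U s : H →L[ℂ] H) = T) →
      ∃ c : ℂ, T = c • (1 : H →L[ℂ] H))
    {p : H →L[ℂ] H} (hp𝔄 : p ∈ 𝔄) (hp0 : p ≠ 0) :
    (⨆ g, (LinearMap.range (p : H →ₗ[ℂ] H)).map (U g : H →ₗ[ℂ] H)).topologicalClosure = ⊤ := by
  refine eq_top_of_ergodic 𝔄 U herg _ ?_ (fun h => ?_) ?_
  · simpa only [range_unitary_conj] using
      VonNeumannAlgebra.starProjection_closure_iSup_range_mem 𝔄 fun g => hinv p hp𝔄 g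
  · refine Submodule.topologicalClosure_mem_invtSubmodule (f := (U h : H →L[ℂ] H)) ?_
    rw [mem_invtSubmodule_iff_map_le, Submodule.map_iSup]
    exact iSup_le fun g => (map_map_unitary U g h _).trans_le (le_iSup_of_le (h * g) le_rfl)
  · refine ne_bot_of_le_ne_bot (b := LinearMap.range (p : H →ₗ[ℂ] H)) ?_
      ((le_iSup_of_le 1 ?_).trans (Submodule.le_topologicalClosure _))
    · rwa [Ne, LinearMap.range_eq_bot, ← toLinearMap_zero, coe_inj]
    · exact (map_unitary_one U _).ge

end Ergodic

theorem VonNeumannAlgebra.exists_isStarProjection_range_le_inf_eq_bot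
    (𝔄 : VonNeumannAlgebra H) {q : H →L[ℂ] H} (hq : IsStarProjection q) (hq𝔄 : q ∈ 𝔄)
    (M : Submodule ℂ H) [M.HasOrthogonalProjection] (hM𝔄 : M.starProjection ∈ 𝔄)
    (hqM : ¬ LinearMap.range (q : H →ₗ[ℂ] H) ≤ M) :
    ∃ r : H →L[ℂ] H, IsStarProjection r ∧ r ∈ 𝔄 ∧ r ≠ 0 ∧
      LinearMap.range (r : H →ₗ[ℂ] H) ≤ LinearMap.range (q : H →ₗ[ℂ] H) ∧
      LinearMap.range (r : H →ₗ[ℂ] H) ⊓ M = ⊥ := by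
  set C : H →L[ℂ] H := (1 - M.starProjection) * q
  have hC𝔄 : C ∈ 𝔄 := mul_mem (sub_mem (one_mem _) hM𝔄) hq𝔄
  have hC_apply : ∀ x ∈ LinearMap.range (q : H →ₗ[ℂ] H), C x = x - M.starProjection x := by
    intro x hx
    change (1 - M.starProjection) (q x) = _
    rw [show q x = x from
      (LinearMap.IsIdempotentElem.mem_range_iff hq.isIdempotentElem.toLinearMap).1 hx]
    rfl
  set K := (LinearMap.ker (C : H →ₗ[ℂ] H))ᗮ
  have hKq : K ≤ LinearMap.range (q : H →ₗ[ℂ] H) := by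
    rw [← hq.orthogonal_ker]
    refine Submodule.orthogonal_le fun x hx => ?_
    simp only [LinearMap.mem_ker, coe_coe] at hx ⊢
    change (1 - M.starProjection) (q x) = 0
    rw [hx, map_zero]
  refine ⟨K.starProjection, isStarProjection_starProjection,
    starProjection_mem_of_forall_mem_invtSubmodule 𝔄 K fun y hy => ?_, fun h0 => ?_, ?_, ?_⟩
  · refine orthogonal_mem_invtSubmodule ?_
    rw [← star_eq_adjoint]
    exact ker_mem_invtSubmodule_of_commute (mem_commutant_iff.1 (star_mem hy) C hC𝔄)
  · obtain ⟨x, hxq, hxM⟩ := SetLike.not_le_iff_exists.1 hqM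
    have hK : K = ⊥ := by rw [← K.range_starProjection, h0, toLinearMap_zero, LinearMap.range_zero]
    rw [Submodule.orthogonal_eq_bot_iff] at hK
    have hCx : C x = 0 := LinearMap.mem_ker.1 (hK ▸ Submodule.mem_top)
    rw [hC_apply x hxq, sub_eq_zero] at hCx
    exact hxM (hCx ▸ M.starProjection_apply_mem x)
  · rwa [K.range_starProjection]
  · rw [K.range_starProjection, eq_bot_iff, ← (LinearMap.ker (C : H →ₗ[ℂ] H)).inf_orthogonal_eq_bot]
    intro x hx
    obtain ⟨hxK, hxM⟩ := Submodule.mem_inf.1 hx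
    refine Submodule.mem_inf.2 ⟨?_, hxK⟩
    rw [LinearMap.mem_ker, coe_coe, hC_apply x (hKq hxK), M.starProjection_eq_self_iff.2 hxM,
      sub_self]

theorem ergodic_extend_disjoint_translates_general
    {G : Type*} [Group G]
    (𝔄 : VonNeumannAlgebra H) (U : G →* unitary (H →L[ℂ] H))
    (hinv : ∀ T ∈ 𝔄, ∀ s : G,
      (U s : H →L[ℂ] H) * T * star (U s : H →L[ℂ] H) ∈ 𝔄)
    (herg : ∀ T ∈ 𝔄,
      (∀ s : G, (U s : H →L[ℂ] H) * T * star (U s : H →L[ℂ] H) = T) →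
      ∃ c : ℂ, T = c • (1 : H →L[ℂ] H))
    (p : H →L[ℂ] H) (hp : IsProjectionCLM p) (hpA : p ∈ 𝔄) (hp0 : p ≠ 0)
    (k : ℕ) (s : Fin k → G)
    (hproper : (⨆ j : Fin k,
        (LinearMap.range (p : H →ₗ[ℂ] H)).map ((U (s j) : H →L[ℂ] H) : H →ₗ[ℂ] H)).topologicalClosure ≠ ⊤) :
    ∃ t : G, t ∉ Set.range s ∧
      ∃ p' : H →L[ℂ] H, IsProjectionCLM p' ∧ p' ∈ 𝔄 ∧ p' ≠ 0 ∧
        LinearMap.range (p' : H →ₗ[ℂ] H) ≤ LinearMap.range (p : H →ₗ[ℂ] H) ∧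
        (⨆ j : Fin k,
            (LinearMap.range (p' : H →ₗ[ℂ] H)).map ((U (s j) : H →L[ℂ] H) : H →ₗ[ℂ] H)).topologicalClosure ⊓
          (LinearMap.range (p' : H →ₗ[ℂ] H)).map ((U t : H →L[ℂ] H) : H →ₗ[ℂ] H) = ⊥ := by
  set R := LinearMap.range (p : H →ₗ[ℂ] H)
  set M := (⨆ j, R.map (U (s j) : H →ₗ[ℂ] H)).topologicalClosure
  have hM𝔄 : M.starProjection ∈ 𝔄 := by
    simpa only [range_unitary_conj] using
      VonNeumannAlgebra.starProjection_closure_iSup_range_mem 𝔄 fun j => hinv p hpA (s j)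
  obtain ⟨t, ht⟩ : ∃ t, ¬ R.map (U t : H →ₗ[ℂ] H) ≤ M := by
    by_contra! h
    refine hproper (eq_top_iff.2 ?_)
    rw [← closure_iSup_map_range_eq_top 𝔄 U hinv herg hpA hp0]
    exact Submodule.topologicalClosure_minimal _ (iSup_le h)
      (Submodule.isClosed_topologicalClosure _)
  obtain ⟨r, hr, hr𝔄, hr0, hrR, hrM⟩ :=
    VonNeumannAlgebra.exists_isStarProjection_range_le_inf_eq_bot 𝔄
      ((isProjectionCLM_iff.1 hp).unitary_conj (U t)) (hinv p hpA t) M hM𝔄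
      (by rwa [range_unitary_conj])
  rw [range_unitary_conj] at hrR
  set p' := (U t⁻¹ : H →L[ℂ] H) * r * star (U t⁻¹ : H →L[ℂ] H)
  have hp'_map : ∀ g, (LinearMap.range (p' : H →ₗ[ℂ] H)).map (U g : H →ₗ[ℂ] H) ≤
      R.map (U g : H →ₗ[ℂ] H) := fun g => by
    rw [map_range_unitary_conj]
    simpa only [map_map_unitary, inv_mul_cancel_right] using
      Submodule.map_mono (f := (U (g * t⁻¹) : H →ₗ[ℂ] H)) hrR
  have hts : t ∉ Set.range s := by
    rintro ⟨j, rfl⟩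
    exact ht ((le_iSup (fun j => R.map (U (s j) : H →ₗ[ℂ] H)) j).trans
      (Submodule.le_topologicalClosure _))
  refine ⟨t, hts, p', isProjectionCLM_iff.2 (hr.unitary_conj (U t⁻¹)), hinv r hr𝔄 t⁻¹,
    (map_ne_zero_iff _ (Unitary.conjStarAlgAut ℂ _ (U t⁻¹)).injective).2 hr0, ?_, ?_⟩
  · simpa only [map_unitary_one] using hp'_map 1
  · rw [eq_bot_iff, ← hrM, inf_comm, map_range_unitary_conj, mul_inv_cancel, map_unitary_one]
    exact inf_le_inf_left _
      (Submodule.topologicalClosure_mono (iSup_mono fun j => hp'_map (s j)))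

/-- Suppose a finite group `G` acts ergodically on a von Neumann algebra `𝔄` via a unitary
representation `U`.  Let `p ∈ 𝔄` be a nonzero projection and `s 0 = 1, s 1, …` distinct
elements of `G` such that for each `i` the closed subspace spanned by the `U (s j) (range p)`
for `j < i` meets `U (s i) (range p)` trivially, and such that the closed subspace spanned by
all the `U (s j) (range p)` is proper.  Then there are `t ∈ G` outside `{s 0, …}` and a
nonzero projection `p' ∈ 𝔄` with `range p' ⊆ range p` such that the closed subspace spanned
by the `U (s j) (range p')` meets `U t (range p')` trivially. -/
theorem ergodic_extend_disjoint_translates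
    {G : Type*} [Group G] [Fintype G]
    (𝔄 : VonNeumannAlgebra H) (U : G →* unitary (H →L[ℂ] H))
    (hinv : ∀ T ∈ 𝔄, ∀ s : G,
      (U s : H →L[ℂ] H) * T * star (U s : H →L[ℂ] H) ∈ 𝔄)
    (herg : ∀ T ∈ 𝔄,
      (∀ s : G, (U s : H →L[ℂ] H) * T * star (U s : H →L[ℂ] H) = T) →
      ∃ c : ℂ, T = c • (1 : H →L[ℂ] H))
    (p : H →L[ℂ] H) (hp : IsProjectionCLM p) (hpA : p ∈ 𝔄) (hp0 : p ≠ 0)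
    (k : ℕ) (hk : 0 < k) (s : Fin k → G)
    (hs1 : s ⟨0, hk⟩ = 1) (hsinj : Function.Injective s)
    (hdisj : ∀ i : Fin k,
      (⨆ j : Fin k, ⨆ _ : j < i,
          (LinearMap.range (p : H →ₗ[ℂ] H)).map ((U (s j) : H →L[ℂ] H) : H →ₗ[ℂ] H)).topologicalClosure ⊓
        (LinearMap.range (p : H →ₗ[ℂ] H)).map ((U (s i) : H →L[ℂ] H) : H →ₗ[ℂ] H) = ⊥)
    (hproper : (⨆ j : Fin k,
        (LinearMap.range (p : H →ₗ[ℂ] H)).map ((U (s j) : H →L[ℂ] H) : H →ₗ[ℂ] H)).topologicalClosure ≠ ⊤) :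
    ∃ t : G, t ∉ Set.range s ∧
      ∃ p' : H →L[ℂ] H, IsProjectionCLM p' ∧ p' ∈ 𝔄 ∧ p' ≠ 0 ∧
        LinearMap.range (p' : H →ₗ[ℂ] H) ≤ LinearMap.range (p : H →ₗ[ℂ] H) ∧
        (⨆ j : Fin k,
            (LinearMap.range (p' : H →ₗ[ℂ] H)).map ((U (s j) : H →L[ℂ] H) : H →ₗ[ℂ] H)).topologicalClosure ⊓
          (LinearMap.range (p' : H →ₗ[ℂ] H)).map ((U t : H →L[ℂ] H) : H →ₗ[ℂ] H) = ⊥ :=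
  ergodic_extend_disjoint_translates_general 𝔄 U hinv herg p hp hpA hp0 k s hproper
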